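/- In a chart with a LLEE-witness, if v ↓ w (v descends in a loop to w) and w does not loop back to any vertex, then w is not normed (there is no path from w to the termination vertex √). -/
import Mathlib


/-- An entry/body-labeled finite chart: a rooted labelled transition system with
termination sink `tick` (√), start vertex `start`, and transitions carrying an
action from `A` together with a marking label in ℕ (label `0` marks body
transitions, positive labels mark entry transitions).  Every vertex other than
possibly `tick` is reachable from the start vertex. -/
structure LChart (V : Type) (A : Type) : Type where
  tick : V
  start : V
  Tr : V → A → ℕ → V → Prop
  tick_no_out : ∀ (a : A) (n : ℕ) (w : V), ¬ Tr tick a n w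
  start_ne_tick : start ≠ tick
  connected : ∀ v : V, v = tick ∨
    Relation.ReflTransGen (fun x y => ∃ (a : A) (n : ℕ), Tr x a n y) start v

namespace LChart

variable {V A : Type}

/-- Body transition step (marking label `0`). -/
def BStep (C : LChart V A) (x y : V) : Prop := ∃ a : A, C.Tr x a 0 y

/-- Entry transition step of level `α > 0`. -/
def EStep (C : LChart V A) (α : ℕ) (x y : V) : Prop := 0 < α ∧ ∃ a : A, C.Tr x a α y

/-- A transition step of any kind. -/
def AnyStep (C : LChart V A) (x y : V) : Prop := ∃ (a : A) (n : ℕ), C.Tr x a n y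

/-- There is an entry transition of level `α` departing from `v`. -/
def HasEntry (C : LChart V A) (v : V) (α : ℕ) : Prop :=
  0 < α ∧ ∃ (a : A) (w : V), C.Tr v a α w

/-- `v` descends in a loop of level `α` to `w`: there is a path from `v` to `w`
starting with an `α`-entry transition and continuing with body transitions, in
which all transition targets avoid `v`. -/
def Descends (C : LChart V A) (v : V) (α : ℕ) (w : V) : Prop :=
  ∃ u : V, C.EStep α v u ∧ u ≠ v ∧
    Relation.ReflTransGen (fun x y => C.BStep x y ∧ y ≠ v) u w

/-- `v` descends in a loop to `w` (at some level). -/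
def Desc (C : LChart V A) (v w : V) : Prop := ∃ α : ℕ, C.Descends v α w

/-- An infinite path from `v` in the loop subchart `C[v,α]`: it starts at `v`,
takes an `α`-entry transition whenever it is at `v`, and body transitions
otherwise. -/
def LoopSeq (C : LChart V A) (v : V) (α : ℕ) (f : ℕ → V) : Prop :=
  f 0 = v ∧ ∀ n : ℕ,
    (f n = v → C.EStep α (f n) (f (n + 1))) ∧ (f n ≠ v → C.BStep (f n) (f (n + 1)))

/-- The conditions (W1), (W2)(a) (the subchart `C[v,α]` is a loop chart, i.e.
(L1) an infinite path from `v` exists, (L2) every infinite path from `v`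
returns to `v` after a positive number of steps, (L3) √ is not a vertex of
`C[v,α]`), and (W2)(b) (layeredness) for an entry/body-labeling to be a
LLEE-witness. -/
structure IsLLEE (C : LChart V A) : Prop where
  w1 : ¬ ∃ f : ℕ → V, f 0 = C.start ∧ ∀ n : ℕ, C.BStep (f n) (f (n + 1))
  w2a_L1 : ∀ (v : V) (α : ℕ), C.HasEntry v α → ∃ f : ℕ → V, C.LoopSeq v α f
  w2a_L2 : ∀ (v : V) (α : ℕ), C.HasEntry v α →
    ∀ f : ℕ → V, C.LoopSeq v α f → ∃ n : ℕ, 0 < n ∧ f n = v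
  w2a_L3 : ∀ (v : V) (α : ℕ), ¬ C.Descends v α C.tick
  w2b : ∀ (v w : V) (α : ℕ), C.Descends v α w → ∀ β : ℕ, α ≤ β → ¬ C.HasEntry w β

/-- `u` and `v` lie in the same strongly connected component. -/
def SameSCC (C : LChart V A) (u v : V) : Prop :=
  Relation.ReflTransGen C.AnyStep u v ∧ Relation.ReflTransGen C.AnyStep v u

/-- `w` loops back to `v`: `v` descends in a loop to `w` and there is a nonempty
path of body transitions from `w` back to `v`. -/
def LoopsBack (C : LChart V A) (w v : V) : Prop :=
  C.Desc v w ∧ Relation.TransGen C.BStep w v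

/-- `w` directly loops back to `v`. -/
def DLoopsBack (C : LChart V A) (w v : V) : Prop :=
  C.LoopsBack w v ∧ ∀ u : V, C.LoopsBack w u → u = v ∨ C.LoopsBack v u

/-- Paths of a fixed length `n`. -/
def PathN (C : LChart V A) (n : ℕ) (x y : V) : Prop :=
  ∃ f : ℕ → V, f 0 = x ∧ f n = y ∧ ∀ i < n, C.AnyStep (f i) (f (i + 1))

lemma rtg_pathN (C : LChart V A) {x y : V}
    (h : Relation.ReflTransGen C.AnyStep x y) : ∃ n, C.PathN n x y := by
  induction h with
  | refl => exact ⟨0, fun _ => x, rfl, rfl, fun i hi => absurd hi (by omega)⟩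
  | @tail b c hab hbc ih =>
    obtain ⟨n, f, h0, hn, hs⟩ := ih
    refine ⟨n + 1, fun i => if i ≤ n then f i else c, ?_, ?_, ?_⟩
    · simp only [if_pos (Nat.zero_le n), h0]
    · simp only [if_neg (by omega : ¬ n + 1 ≤ n)]
    · intro i hi
      by_cases h1 : i < n
      · simp only [if_pos (le_of_lt h1), if_pos (show i + 1 ≤ n from h1)]
        exact hs i h1
      · have hin : i = n := by omega
        subst hin
        simp only [if_pos (le_refl i), if_neg (by omega : ¬ i + 1 ≤ i)]
        rw [hn]
        exact hbc

lemma pathN_succ_shift (C : LChart V A) {n : ℕ} {x y : V} (h : C.PathN (n + 1) x y) :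
    ∃ z, C.AnyStep x z ∧ C.PathN n z y := by
  obtain ⟨f, h0, hn, hs⟩ := h
  exact ⟨f 1, h0 ▸ hs 0 (Nat.succ_pos n),
    fun i => f (i + 1), rfl, hn, fun i hi => hs (i + 1) (by omega)⟩

lemma Descends.tail {C : LChart V A} {x : V} {β : ℕ} {y z : V}
    (hd : C.Descends x β y) (hb : C.BStep y z) (hz : z ≠ x) : C.Descends x β z := by
  obtain ⟨u, hE, hu, hp⟩ := hd
  exact ⟨u, hE, hu, hp.tail ⟨hb, hz⟩⟩

/-- If `x` descends to `y`, then every path from `y` to √ passes through `x`,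
yielding a strictly shorter path from `x` to √. -/
lemma descends_path_through (C : LChart V A) (h : C.IsLLEE) :
    ∀ β n (x y : V), C.Descends x β y → C.PathN n y C.tick →
      ∃ m, m < n ∧ C.PathN m x C.tick := by
  intro β
  induction β using Nat.strong_induction_on with
  | _ β IHβ =>
  intro n
  induction n using Nat.strong_induction_on with
  | _ n IHn =>
  intro x y hd hp
  cases n with
  | zero =>
    obtain ⟨f, h0, hn, _⟩ := hp
    have hy : y = C.tick := by rw [← h0, hn]
    exact absurd (hy ▸ hd) (h.w2a_L3 x β)
  | succ n' =>
    obtain ⟨z, ⟨a, k, tr⟩, rest⟩ := C.pathN_succ_shift hp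
    rcases Nat.eq_zero_or_pos k with hk | hk
    · subst hk
      have hb : C.BStep y z := ⟨a, tr⟩
      by_cases hz : z = x
      · exact ⟨n', Nat.lt_succ_self _, hz ▸ rest⟩
      · obtain ⟨m, hm, hpm⟩ := IHn n' (Nat.lt_succ_self _) x z (hd.tail hb hz) rest
        exact ⟨m, by omega, hpm⟩
    · have hkβ : k < β := by
        by_contra hge
        exact h.w2b x y β hd k (le_of_not_gt hge) ⟨hk, a, z, tr⟩
      by_cases hz : z = y
      · obtain ⟨m, hm, hpm⟩ := IHn n' (Nat.lt_succ_self _) x y hd (hz ▸ rest)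
        exact ⟨m, by omega, hpm⟩
      · obtain ⟨m, hm, hpm⟩ := IHβ k hkβ n' y z ⟨z, ⟨hk, a, tr⟩, hz, .refl⟩ rest
        obtain ⟨m', hm', hpm'⟩ := IHn m (by omega) x y hd hpm
        exact ⟨m', by omega, hpm'⟩

end LChart

/-- If `v` descends in a loop to `w` and `w` does not loop back to any vertex, then
`w` is not normed: there is no path from `w` to the termination vertex √. -/
theorem descends_not_loopsBack_not_normed {V A : Type} [Finite V] (C : LChart V A)
    (h : C.IsLLEE) (v w : V) (hd : C.Desc v w)
    (hnl : ¬ ∃ x : V, C.LoopsBack w x) :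
    ¬ Relation.ReflTransGen C.AnyStep w C.tick := by
  intro hr
  obtain ⟨α, hdes⟩ := hd
  obtain ⟨n, hp⟩ := C.rtg_pathN hr
  have aux : ∀ n, ∀ x : V, C.Descends v α x → Relation.ReflTransGen C.BStep w x →
      C.PathN n x C.tick → False := by
    intro n
    induction n using Nat.strong_induction_on with
    | _ n IH =>
    intro x hdx hbo hp
    cases n with
    | zero =>
      obtain ⟨f, h0, hn, _⟩ := hp
      have hx : x = C.tick := by rw [← h0, hn]
      exact h.w2a_L3 v α (hx ▸ hdx)
    | succ n' =>
      obtain ⟨z, ⟨a, k, tr⟩, rest⟩ := C.pathN_succ_shift hp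
      rcases Nat.eq_zero_or_pos k with hk | hk
      · subst hk
        have hb : C.BStep x z := ⟨a, tr⟩
        by_cases hz : z = v
        · rw [hz] at hb
          exact hnl ⟨v, ⟨⟨α, hdes⟩, Relation.TransGen.tail' hbo hb⟩⟩
        · exact IH n' (Nat.lt_succ_self _) z (hdx.tail hb hz) (hbo.tail hb) rest
      · have hkα : k < α := by
          by_contra hge
          exact h.w2b v x α hdx k (le_of_not_gt hge) ⟨hk, a, z, tr⟩
        by_cases hz : z = x
        · exact IH n' (Nat.lt_succ_self _) x hdx hbo (hz ▸ rest)
        · obtain ⟨m, hm, hpm⟩ :=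
            C.descends_path_through h k n' x z ⟨z, ⟨hk, a, tr⟩, hz, .refl⟩ rest
          exact IH m (by omega) x hdx hbo hpm
  exact aux n w hdes .refl hp
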